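/- (Entrywise bound for products with sparse covariance matrices.) Let τ ∈ (0,2) and c, C₀, C > 0. There exists a constant C'' > 0, depending only on τ, c, C₀, C, such that for every T ≥ 1, every T×T real matrix B with |B_{ik}| ≤ c/T for all i,k, and every T×T real symmetric positive semidefinite matrix Σ with λ_max(Σ) ≤ C₀ and max_{1≤j≤T} Σ_{k=1}^T |Σ_{kj}|^τ ≤ C, one has |(BΣ)_{ij}| ≤ C''·T^{max(−1, −1/τ)} for all 1 ≤ i,j ≤ T. -/

import Mathlib

open MeasureTheory ProbabilityTheory Filter Matrix

noncomputable section

theorem stmt19 (τ c C₀ C : ℝ)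
    (hτ0 : 0 < τ) (hτ2 : τ < 2) (hc : 0 < c) (hC₀ : 0 < C₀) (hC : 0 < C) :
    ∃ C'' : ℝ, 0 < C'' ∧
      ∀ (T : ℕ), 1 ≤ T → ∀ (B S : Matrix (Fin T) (Fin T) ℝ),
        (∀ i k, |B i k| ≤ c / T) → S.PosSemidef →
        (∀ v : Fin T → ℝ, dotProduct v (S.mulVec v) ≤ C₀ * ∑ t, v t ^ 2) →
        (∀ j : Fin T, ∑ k, |S k j| ^ τ ≤ C) →
        ∀ i j : Fin T, |(B * S) i j| ≤ C'' * (T : ℝ) ^ (max (-1 : ℝ) (-1 / τ)) := by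
  set M : ℝ := max 1 (C ^ (1 / τ)) with hM
  have hM1 : (1 : ℝ) ≤ M := le_max_left _ _
  refine ⟨c * (1 + C) * (1 + M), by positivity, ?_⟩
  intro T hT B S hB hS hquad hrow i j
  have hT0 : (0 : ℝ) < T := by exact_mod_cast hT
  -- entrywise bound on S from the row-sum hypothesis
  have hentry : ∀ k : Fin T, |S k j| ≤ C ^ (1 / τ) := by
    intro k
    have h1 : |S k j| ^ τ ≤ C :=
      le_trans (Finset.single_le_sum (f := fun k => |S k j| ^ τ)
        (fun k _ => Real.rpow_nonneg (abs_nonneg _) _) (Finset.mem_univ k)) (hrow j)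
    have h2 : |S k j| = (|S k j| ^ τ) ^ (1 / τ) := by
      rw [← Real.rpow_mul (abs_nonneg _), mul_one_div, div_self hτ0.ne', Real.rpow_one]
    rw [h2]
    exact Real.rpow_le_rpow (Real.rpow_nonneg (abs_nonneg _) _) h1 (by positivity)
  -- step 1
  have hstep1 : |(B * S) i j| ≤ c / T * ∑ k, |S k j| := by
    rw [Matrix.mul_apply]
    calc |∑ k, B i k * S k j| ≤ ∑ k, |B i k * S k j| := Finset.abs_sum_le_sum_abs _ _
      _ ≤ ∑ k, c / T * |S k j| := Finset.sum_le_sum (fun k _ => by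
            rw [abs_mul]; exact mul_le_mul_of_nonneg_right (hB i k) (abs_nonneg _))
      _ = c / T * ∑ k, |S k j| := (Finset.mul_sum _ _ _).symm
  have hneg : (-1 : ℝ) / τ = -(1 / τ) := by ring
  rcases le_or_gt τ 1 with hτ1 | hτ1
  · -- case τ ≤ 1 : max = -1
    have h1τ : (1 : ℝ) ≤ 1 / τ := by rw [le_div_iff₀ hτ0]; linarith
    have hmax : max (-1 : ℝ) (-1 / τ) = -1 := max_eq_left (by rw [hneg]; linarith)
    have hsum : ∑ k, |S k j| ≤ M ^ (1 - τ) * C := by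
      have hpt : ∀ k : Fin T, |S k j| ≤ M ^ (1 - τ) * |S k j| ^ τ := by
        intro k
        have h0 : |S k j| = |S k j| ^ τ * |S k j| ^ (1 - τ) := by
          rw [← Real.rpow_add' (abs_nonneg _) (by norm_num),
            show τ + (1 - τ) = 1 by ring, Real.rpow_one]
        calc |S k j| = |S k j| ^ τ * |S k j| ^ (1 - τ) := h0
          _ ≤ |S k j| ^ τ * M ^ (1 - τ) := by
              refine mul_le_mul_of_nonneg_left ?_ (Real.rpow_nonneg (abs_nonneg _) _)
              exact Real.rpow_le_rpow (abs_nonneg _)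
                (le_trans (hentry k) (le_max_right _ _)) (by linarith)
          _ = M ^ (1 - τ) * |S k j| ^ τ := mul_comm _ _
      calc ∑ k, |S k j| ≤ ∑ k, M ^ (1 - τ) * |S k j| ^ τ :=
            Finset.sum_le_sum (fun k _ => hpt k)
        _ = M ^ (1 - τ) * ∑ k, |S k j| ^ τ := (Finset.mul_sum _ _ _).symm
        _ ≤ M ^ (1 - τ) * C := by
            refine mul_le_mul_of_nonneg_left (hrow j) (Real.rpow_nonneg ?_ _)
            linarith
    rw [hmax, Real.rpow_neg_one]
    have hMle : M ^ (1 - τ) ≤ M := by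
      nth_rewrite 2 [show M = M ^ (1 : ℝ) from (Real.rpow_one M).symm]
      exact Real.rpow_le_rpow_of_exponent_le hM1 (by linarith)
    have hkey : c / T * (M ^ (1 - τ) * C) ≤ c * (1 + C) * (1 + M) * (T : ℝ)⁻¹ := by
      rw [div_eq_mul_inv, mul_comm c (T : ℝ)⁻¹, mul_assoc,
        mul_comm (c * (1 + C) * (1 + M)) (T : ℝ)⁻¹]
      refine mul_le_mul_of_nonneg_left ?_ (by positivity)
      have hM0 : (0 : ℝ) < M := by linarith
      nlinarith [mul_le_mul_of_nonneg_left hMle hC.le, hM0, hC, hc]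
    calc |(B * S) i j| ≤ c / T * ∑ k, |S k j| := hstep1
      _ ≤ c / T * (M ^ (1 - τ) * C) := by
          refine mul_le_mul_of_nonneg_left hsum (by positivity)
      _ ≤ c * (1 + C) * (1 + M) * (T : ℝ)⁻¹ := hkey
  · -- case 1 < τ : max = -1/τ
    have hmax : max (-1 : ℝ) (-1 / τ) = -1 / τ := by
      refine max_eq_right ?_
      rw [hneg]
      have : 1 / τ ≤ 1 := by rw [div_le_one hτ0]; linarith
      linarith
    set t : ℝ := (T : ℝ) ^ ((-1 : ℝ) / τ) with ht
    have ht0 : 0 < t := Real.rpow_pos_of_pos hT0 _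
    have hpt : ∀ k : Fin T, |S k j| ≤ t + |S k j| ^ τ * t ^ (1 - τ) := by
      intro k
      rcases le_total |S k j| t with h | h
      · have : (0 : ℝ) ≤ |S k j| ^ τ * t ^ (1 - τ) := by positivity
        linarith
      · have htτ : (0 : ℝ) < t ^ τ := Real.rpow_pos_of_pos ht0 _
        have h1 : |S k j| ^ τ * t ^ (1 - τ) = (|S k j| / t) ^ τ * t := by
          rw [Real.div_rpow (abs_nonneg _) ht0.le, Real.rpow_sub ht0, Real.rpow_one]
          field_simp
        have h2 : (1 : ℝ) ≤ |S k j| / t := (one_le_div ht0).mpr h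
        have h3 : |S k j| / t ≤ (|S k j| / t) ^ τ := by
          nth_rewrite 1 [show |S k j| / t = (|S k j| / t) ^ (1 : ℝ) from
            (Real.rpow_one _).symm]
          exact Real.rpow_le_rpow_of_exponent_le h2 hτ1.le
        have h4 : |S k j| = |S k j| / t * t := (div_mul_cancel₀ _ ht0.ne').symm
        have h5 : |S k j| / t * t ≤ (|S k j| / t) ^ τ * t :=
          mul_le_mul_of_nonneg_right h3 ht0.le
        rw [h1]
        linarith [h4 ▸ h5]
    have hsum : ∑ k, |S k j| ≤ (T : ℝ) * t + C * t ^ (1 - τ) := by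
      calc ∑ k, |S k j| ≤ ∑ k : Fin T, (t + |S k j| ^ τ * t ^ (1 - τ)) :=
            Finset.sum_le_sum (fun k _ => hpt k)
        _ = (T : ℝ) * t + (∑ k, |S k j| ^ τ) * t ^ (1 - τ) := by
            rw [Finset.sum_add_distrib, Finset.sum_const, Finset.card_univ,
              Fintype.card_fin, ← Finset.sum_mul, nsmul_eq_mul]
        _ ≤ (T : ℝ) * t + C * t ^ (1 - τ) := by
            have : (0 : ℝ) ≤ t ^ (1 - τ) := (Real.rpow_pos_of_pos ht0 _).le
            nlinarith [hrow j]
    have hTt : (T : ℝ) * t = (T : ℝ) ^ (1 - 1 / τ) := by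
      rw [ht, show (1 : ℝ) - 1 / τ = 1 + (-1) / τ by ring, Real.rpow_add hT0,
        Real.rpow_one]
    have htexp : t ^ (1 - τ) = (T : ℝ) ^ (1 - 1 / τ) := by
      rw [ht, ← Real.rpow_mul hT0.le]
      congr 1
      field_simp
      ring
    have hfin : (T : ℝ) ^ ((1 : ℝ) - 1 / τ) * (T : ℝ)⁻¹ = (T : ℝ) ^ ((-1 : ℝ) / τ) := by
      rw [← Real.rpow_neg_one (T : ℝ), ← Real.rpow_add hT0]
      congr 1
      ring
    rw [hmax]
    calc |(B * S) i j| ≤ c / T * ∑ k, |S k j| := hstep1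
      _ ≤ c / T * ((T : ℝ) * t + C * t ^ (1 - τ)) :=
          mul_le_mul_of_nonneg_left hsum (by positivity)
      _ = c / T * ((1 + C) * (T : ℝ) ^ ((1 : ℝ) - 1 / τ)) := by
          rw [hTt, htexp]; ring
      _ = c * (1 + C) * ((T : ℝ) ^ ((1 : ℝ) - 1 / τ) * (T : ℝ)⁻¹) := by
          field_simp
      _ = c * (1 + C) * (T : ℝ) ^ ((-1 : ℝ) / τ) := by rw [hfin]
      _ ≤ c * (1 + C) * (1 + M) * (T : ℝ) ^ ((-1 : ℝ) / τ) := by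
          have hp : (0 : ℝ) < (T : ℝ) ^ ((-1 : ℝ) / τ) := Real.rpow_pos_of_pos hT0 _
          have h2 : c * (1 + C) ≤ c * (1 + C) * (1 + M) := by nlinarith [mul_nonneg (mul_nonneg hc.le (by linarith : (0:ℝ) ≤ 1 + C)) (by linarith : (0:ℝ) ≤ M)]
          exact mul_le_mul_of_nonneg_right h2 hp.le
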